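/- arXiv:2003.09712 — 7 statements merged into one kernel-verified Lean document; each statement's English description precedes it below -/
import Mathlib

section
/- Let H be a finite set of hypotheses, Q0 : H → ℝ≥0 a prior with Q0(h) > 0 for all h, err : H → ℝ≥0 an error function, and for a teaching set S let Q(h|S) = Q0(h)·(1−η)^{m_h(S)} where η ∈ (0,1] and m_h(S) ∈ ℕ is the number of examples in S misclassified by h. Define F(S) = Σ_{h∈H} (Q0(h) − Q(h|S))·err(h) and Err(S) = (Σ_h Q(h|S)·err(h)) / (Σ_h Q(h|S)). Suppose there is a target hypothesis h* ∈ H with err(h*) = 0 and m_{h*}(S) = 0 (realizability: h* classifies all teaching examples correctly). Then F(S) ≥ Σ_h Q0(h)·err(h) − ε·Q0(h*) implies Err(S) ≤ ε. -/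
theorem stmt_0 {H : Type*} [Fintype H]
    (Q0 err : H → ℝ) (hQ0 : ∀ h, 0 < Q0 h) (herr : ∀ h, 0 ≤ err h)
    (η : ℝ) (hη : 0 < η) (hη1 : η ≤ 1)
    (m : H → ℕ) (hstar : H) (hm : m hstar = 0) (hes : err hstar = 0)
    (ε : ℝ) (hε : 0 ≤ ε)
    (Q : H → ℝ) (hQ : ∀ h, Q h = Q0 h * (1 - η) ^ (m h))
    (hF : ∑ h, (Q0 h - Q h) * err h ≥ ∑ h, Q0 h * err h - ε * Q0 hstar) :
    (∑ h, Q h * err h) / (∑ h, Q h) ≤ ε := by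
  have hQnn : ∀ h, 0 ≤ Q h := fun h => by
    rw [hQ h]
    exact mul_nonneg (hQ0 h).le (pow_nonneg (by linarith) _)
  have hQstar : Q hstar = Q0 hstar := by rw [hQ, hm, pow_zero, mul_one]
  have hsum_pos : 0 < ∑ h, Q h := by
    have := Finset.single_le_sum (f := Q) (fun h _ => hQnn h) (Finset.mem_univ hstar)
    rw [hQstar] at this
    linarith [hQ0 hstar]
  have hkey : ∑ h, Q h * err h ≤ ε * Q0 hstar := by
    have : ∑ h, (Q0 h - Q h) * err h = ∑ h, Q0 h * err h - ∑ h, Q h * err h := by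
      rw [← Finset.sum_sub_distrib]
      exact Finset.sum_congr rfl fun h _ => by ring
    linarith [hF, this ▸ hF]
  rw [div_le_iff₀ hsum_pos]
  have h2 : ε * Q0 hstar ≤ ε * ∑ h, Q h := by
    apply mul_le_mul_of_nonneg_left _ hε
    rw [← hQstar]
    exact Finset.single_le_sum (fun h _ => hQnn h) (Finset.mem_univ hstar)
  linarith
end

section
/- The surrogate teaching objective is monotone and submodular: for a ground set Z of labeled examples, a finite hypothesis set H, prior Q0 : H → ℝ≥0, error err : H → ℝ≥0, learning rate η ∈ (0,1], and misclassification indicator c : H × Z → {0,1}, the set function G(S) = Σ_{h∈H} Q0(h)·err(h)·(1 − (1−η)^{Σ_{z∈S} c(h,z)}) defined on subsets S ⊆ Z is monotone nondecreasing and submodular. -/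
theorem stmt_2 {Z H : Type*} [Fintype Z] [Fintype H] [DecidableEq Z]
    (Q0 err : H → ℝ) (hQ0 : ∀ h, 0 ≤ Q0 h) (herr : ∀ h, 0 ≤ err h)
    (η : ℝ) (hη : 0 < η) (hη1 : η ≤ 1)
    (c : H → Z → ℕ) (hc : ∀ h z, c h z ≤ 1)
    (G : Finset Z → ℝ)
    (hG : ∀ S, G S = ∑ h, Q0 h * err h * (1 - (1 - η) ^ (∑ z ∈ S, c h z))) :
    (∀ S T : Finset Z, S ⊆ T → G S ≤ G T) ∧
    (∀ S T : Finset Z, ∀ z, S ⊆ T → z ∉ T →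
      G (insert z T) - G T ≤ G (insert z S) - G S) := by
  set a : ℝ := 1 - η with ha
  have ha0 : 0 ≤ a := by linarith
  have ha1 : a ≤ 1 := by linarith
  constructor
  · intro S T hST
    rw [hG S, hG T]
    apply Finset.sum_le_sum
    intro h _
    have hmono : (a : ℝ) ^ (∑ z ∈ T, c h z) ≤ a ^ (∑ z ∈ S, c h z) :=
      pow_le_pow_of_le_one ha0 ha1 (Finset.sum_le_sum_of_subset hST)
    have := mul_nonneg (hQ0 h) (herr h)
    nlinarith
  · intro S T z hST hzT
    have hzS : z ∉ S := fun hz => hzT (hST hz)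
    rw [hG (insert z T), hG T, hG (insert z S), hG S,
      ← Finset.sum_sub_distrib, ← Finset.sum_sub_distrib]
    apply Finset.sum_le_sum
    intro h _
    rw [Finset.sum_insert hzT, Finset.sum_insert hzS]
    have hmono : (a : ℝ) ^ (∑ z ∈ T, c h z) ≤ a ^ (∑ z ∈ S, c h z) :=
      pow_le_pow_of_le_one ha0 ha1 (Finset.sum_le_sum_of_subset hST)
    have hk : a ^ (c h z) ≤ 1 := pow_le_one₀ ha0 ha1
    have key : a ^ (∑ w ∈ T, c h w) * (1 - a ^ (c h z)) ≤
        a ^ (∑ w ∈ S, c h w) * (1 - a ^ (c h z)) :=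
      mul_le_mul_of_nonneg_right hmono (by linarith)
    have hQe := mul_nonneg (hQ0 h) (herr h)
    have e1 : a ^ (c h z + ∑ w ∈ T, c h w) = a ^ (c h z) * a ^ (∑ w ∈ T, c h w) :=
      pow_add a _ _
    have e2 : a ^ (c h z + ∑ w ∈ S, c h w) = a ^ (c h z) * a ^ (∑ w ∈ S, c h w) :=
      pow_add a _ _
    nlinarith [mul_le_mul_of_nonneg_left key hQe]
end

section
/- Failure under overestimated learning rate (Theorem 2, part 1 core): for every true learning rate η ∈ (0,1), every overestimate gap δ ∈ (0, 1−η], and every ε > 0, there exist m ∈ ℕ and a prior ratio r > 0 such that the two-hypothesis posterior error computed with rate η̃ = η + δ satisfies r·(1−η̃)^m / (r·(1−η̃)^m + 1) ≤ ε, while the true posterior error with rate η satisfies r·(1−η)^m / (r·(1−η)^m + 1) ≥ 1/2. -/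
theorem stmt_6 (η δ ε : ℝ) (hη : 0 < η) (hη1 : η < 1)
    (hδ : 0 < δ) (hδ' : δ ≤ 1 - η) (hε : 0 < ε) :
    ∃ (m : ℕ) (r : ℝ), 0 < r ∧
      r * (1 - (η + δ)) ^ m / (r * (1 - (η + δ)) ^ m + 1) ≤ ε ∧
      r * (1 - η) ^ m / (r * (1 - η) ^ m + 1) ≥ 1 / 2 := by
  set a : ℝ := 1 - η with ha
  set b : ℝ := 1 - (η + δ) with hb
  have ha0 : 0 < a := by simp [ha]; linarith
  have hb0 : 0 ≤ b := by simp [hb]; linarith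
  have hba : b / a < 1 := by
    rw [div_lt_one ha0]; simp [ha, hb]; linarith
  have hba0 : 0 ≤ b / a := div_nonneg hb0 ha0.le
  obtain ⟨m, hm⟩ := exists_pow_lt_of_lt_one hε hba
  refine ⟨m, 1 / a ^ m, by positivity, ?_, ?_⟩
  · have hx : (1 / a ^ m) * b ^ m = (b / a) ^ m := by
      rw [div_pow]; field_simp
    rw [hx]
    have h1 : (0:ℝ) ≤ (b/a)^m := pow_nonneg hba0 m
    calc (b/a)^m / ((b/a)^m + 1) ≤ (b/a)^m / 1 := by
          apply div_le_div_of_nonneg_left h1 one_pos (by linarith)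
      _ = (b/a)^m := div_one _
      _ ≤ ε := hm.le
  · have hx : (1 / a ^ m) * a ^ m = 1 := by
      field_simp
    rw [hx]
    norm_num
end

section
/- Posterior stability under bounded misclassification-count perturbation (smoothness lemma): let η ∈ (0,1), Q0 : H → ℝ≥0, and m, m' : H → ℕ with |m(h) − m'(h)| ≤ k for all h (k ∈ ℕ). Then for every h, (1−η)^k · Q0(h)·(1−η)^{m(h)} ≤ Q0(h)·(1−η)^{m'(h)} ≤ (1−η)^{−k} · Q0(h)·(1−η)^{m(h)}, and consequently the normalized posteriors satisfy, for all h, p'(h) ≥ (1−η)^{2k}·p(h), where p(h) = Q0(h)(1−η)^{m(h)}/Σ_{h'}Q0(h')(1−η)^{m(h')} and p' is defined analogously with m'. -/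
theorem stmt_11 {H : Type*} [Fintype H]
    (Q0 : H → ℝ) (hQ0 : ∀ h, 0 < Q0 h)
    (η : ℝ) (hη : 0 < η) (hη1 : η < 1)
    (k : ℕ) (m m' : H → ℕ) (hmm : ∀ h, |(m h : ℤ) - (m' h : ℤ)| ≤ (k : ℤ))
    (p p' : H → ℝ)
    (hp : ∀ h, p h = Q0 h * (1 - η) ^ (m h) / ∑ h', Q0 h' * (1 - η) ^ (m h'))
    (hp' : ∀ h, p' h = Q0 h * (1 - η) ^ (m' h) / ∑ h', Q0 h' * (1 - η) ^ (m' h')) :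
    (∀ h, (1 - η) ^ k * (Q0 h * (1 - η) ^ (m h)) ≤ Q0 h * (1 - η) ^ (m' h)) ∧
    (∀ h, Q0 h * (1 - η) ^ (m' h) ≤ ((1 - η) ^ k)⁻¹ * (Q0 h * (1 - η) ^ (m h))) ∧
    (∀ h, (1 - η) ^ (2 * k) * p h ≤ p' h) := by
  have hb : (0:ℝ) < 1 - η := by linarith
  have hb1 : (1:ℝ) - η ≤ 1 := by linarith
  have hbk : (0:ℝ) < (1 - η) ^ k := pow_pos hb k
  have hA : ∀ h, (1 - η) ^ k * (Q0 h * (1 - η) ^ (m h)) ≤ Q0 h * (1 - η) ^ (m' h) := by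
    intro h
    have h1 : m' h ≤ k + m h := by have := hmm h; rw [abs_le] at this; omega
    have : (1 - η) ^ (k + m h) ≤ (1 - η) ^ (m' h) :=
      pow_le_pow_of_le_one hb.le hb1 h1
    rw [pow_add] at this
    calc (1 - η) ^ k * (Q0 h * (1 - η) ^ (m h))
        = Q0 h * ((1 - η) ^ k * (1 - η) ^ (m h)) := by ring
      _ ≤ Q0 h * (1 - η) ^ (m' h) := by
          exact mul_le_mul_of_nonneg_left this (hQ0 h).le
  have hB : ∀ h, Q0 h * (1 - η) ^ (m' h) ≤ ((1 - η) ^ k)⁻¹ * (Q0 h * (1 - η) ^ (m h)) := by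
    intro h
    have h1 : m h ≤ k + m' h := by have := hmm h; rw [abs_le] at this; omega
    have h2 : (1 - η) ^ (k + m' h) ≤ (1 - η) ^ (m h) :=
      pow_le_pow_of_le_one hb.le hb1 h1
    rw [pow_add] at h2
    have := mul_le_mul_of_nonneg_left h2 (hQ0 h).le
    rw [le_inv_mul_iff₀ hbk]
    calc (1 - η) ^ k * (Q0 h * (1 - η) ^ (m' h))
        = Q0 h * ((1 - η) ^ k * (1 - η) ^ (m' h)) := by ring
      _ ≤ Q0 h * (1 - η) ^ (m h) := this
  refine ⟨hA, hB, ?_⟩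
  intro h
  have : Nonempty H := ⟨h⟩
  set S := ∑ h', Q0 h' * (1 - η) ^ (m h') with hS
  set S' := ∑ h', Q0 h' * (1 - η) ^ (m' h') with hS'
  have hSpos : 0 < S := Finset.sum_pos (fun i _ => mul_pos (hQ0 i) (pow_pos hb _)) Finset.univ_nonempty
  have hS'pos : 0 < S' := Finset.sum_pos (fun i _ => mul_pos (hQ0 i) (pow_pos hb _)) Finset.univ_nonempty
  have hSle : S' ≤ ((1 - η) ^ k)⁻¹ * S := by
    rw [Finset.mul_sum]
    exact Finset.sum_le_sum fun i _ => hB i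
  rw [hp, hp', mul_div_assoc', div_le_div_iff₀ hSpos hS'pos]
  calc (1 - η) ^ (2 * k) * (Q0 h * (1 - η) ^ (m h)) * S'
      ≤ (1 - η) ^ (2 * k) * (Q0 h * (1 - η) ^ (m h)) * (((1 - η) ^ k)⁻¹ * S) := by
        exact mul_le_mul_of_nonneg_left hSle
          (mul_nonneg (pow_nonneg hb.le _) (mul_nonneg (hQ0 h).le (pow_nonneg hb.le _)))
    _ = (1 - η) ^ k * (Q0 h * (1 - η) ^ (m h)) * S := by
        field_simp
        ring
    _ ≤ Q0 h * (1 - η) ^ (m' h) * S := by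
        exact mul_le_mul_of_nonneg_right (hA h) hSpos.le
end

section
/- Let H be finite with target h* ∈ H, Q0 : H → (0,∞), η ∈ (0,1), m : H → ℕ with m(h*) ≤ k (the teacher's chosen set may cause h* to misclassify at most k examples due to representation noise), and err, err̃ : H → ℝ≥0 with |err̃(h) − err(h)| ≤ δ2 for all h and err̃(h*) = 0. Let Q(h) = Q0(h)(1−η)^{m(h)}, let m̃ : H → ℕ be the teacher-side counts with m̃(h*) = 0 and |m(h) − m̃(h)| ≤ k for all h, and let Q̃(h) = Q0(h)(1−η)^{m̃(h)}. If Σ_h Q̃(h)·err̃(h) ≤ ε·Q0(h*), then the true expected error satisfies (Σ_h Q(h)·err(h))/(Σ_h Q(h)) ≤ ((ε·Q0(h*) + δ2·Σ_h Q̃(h)) · (1−η)^{−k}) / (Q0(h*)·(1−η)^k). -/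
theorem stmt_12 {H : Type*} [Fintype H]
    (hstar : H) (Q0 : H → ℝ) (hQ0 : ∀ h, 0 < Q0 h)
    (η : ℝ) (hη : 0 < η) (hη1 : η < 1)
    (k : ℕ) (δ2 ε : ℝ) (hδ2 : 0 ≤ δ2) (hε : 0 ≤ ε)
    (m mt : H → ℕ) (hmt : mt hstar = 0) (hmm : ∀ h, |(m h : ℤ) - (mt h : ℤ)| ≤ (k : ℤ))
    (err errt : H → ℝ) (herr : ∀ h, 0 ≤ err h) (herrt : ∀ h, 0 ≤ errt h)
    (hclose : ∀ h, |errt h - err h| ≤ δ2) (hes : errt hstar = 0)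
    (Q Qt : H → ℝ)
    (hQ : ∀ h, Q h = Q0 h * (1 - η) ^ (m h))
    (hQt : ∀ h, Qt h = Q0 h * (1 - η) ^ (mt h))
    (hmain : ∑ h, Qt h * errt h ≤ ε * Q0 hstar) :
    (∑ h, Q h * err h) / (∑ h, Q h)
      ≤ (ε * Q0 hstar + δ2 * ∑ h, Qt h) / (Q0 hstar * (1 - η) ^ (2 * k)) := by
  have h1η : (0:ℝ) < 1 - η := by linarith
  have h1η1 : (1:ℝ) - η ≤ 1 := by linarith
  have hQpos : ∀ h, 0 < Q h := fun h => by
    have := hQ0 h; rw [hQ h]; positivity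
  have hQtpos : ∀ h, 0 < Qt h := fun h => by
    have := hQ0 h; rw [hQt h]; positivity
  -- per-element bound
  have key : ∀ h, Q h * err h * (1 - η) ^ k ≤ Qt h * (errt h + δ2) := by
    intro h
    have hmle : mt h ≤ m h + k := by
      have h2 := abs_le.1 (hmm h)
      omega
    have hpow : (1 - η) ^ (m h + k) ≤ (1 - η) ^ (mt h) :=
      pow_le_pow_of_le_one h1η.le h1η1 hmle
    have herrle : err h ≤ errt h + δ2 := by
      have := abs_le.1 (hclose h); linarith
    calc Q h * err h * (1 - η) ^ k
        = Q0 h * (1 - η) ^ (m h + k) * err h := by rw [hQ h, pow_add]; ring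
      _ ≤ Q0 h * (1 - η) ^ (mt h) * (errt h + δ2) := by
          apply mul_le_mul
          · exact mul_le_mul_of_nonneg_left hpow (hQ0 h).le
          · exact herrle
          · exact herr h
          · have := hQ0 h; positivity
      _ = Qt h * (errt h + δ2) := by rw [hQt h]
  have hsum : (∑ h, Q h * err h) * (1 - η) ^ k ≤ ε * Q0 hstar + δ2 * ∑ h, Qt h := by
    calc (∑ h, Q h * err h) * (1 - η) ^ k
        = ∑ h, Q h * err h * (1 - η) ^ k := by rw [Finset.sum_mul]
      _ ≤ ∑ h, Qt h * (errt h + δ2) := Finset.sum_le_sum fun h _ => key h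
      _ = (∑ h, Qt h * errt h) + δ2 * ∑ h, Qt h := by
          rw [Finset.mul_sum, ← Finset.sum_add_distrib]
          exact Finset.sum_congr rfl fun h _ => by ring
      _ ≤ ε * Q0 hstar + δ2 * ∑ h, Qt h := by linarith [hmain]
  have hden : Q0 hstar * (1 - η) ^ k ≤ ∑ h, Q h := by
    have hms : m hstar ≤ k := by
      have h2 := abs_le.1 (hmm hstar); omega
    have : Q0 hstar * (1 - η) ^ k ≤ Q hstar := by
      rw [hQ hstar]
      exact mul_le_mul_of_nonneg_left (pow_le_pow_of_le_one h1η.le h1η1 hms) (hQ0 hstar).le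
    calc Q0 hstar * (1 - η) ^ k ≤ Q hstar := this
      _ ≤ ∑ h, Q h := Finset.single_le_sum (fun h _ => (hQpos h).le) (Finset.mem_univ _)
  have hsumQpos : 0 < ∑ h, Q h := Finset.sum_pos (fun h _ => hQpos h) (have : Nonempty H := ⟨hstar⟩; Finset.univ_nonempty)
  have hNnn : 0 ≤ ε * Q0 hstar + δ2 * ∑ h, Qt h := by
    have : 0 ≤ ∑ h, Qt h := Finset.sum_nonneg fun h _ => (hQtpos h).le
    have := hQ0 hstar
    positivity
  have hnumnn : 0 ≤ ∑ h, Q h * err h :=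
    Finset.sum_nonneg fun h _ => mul_nonneg (hQpos h).le (herr h)
  have hQ0s := hQ0 hstar
  rw [div_le_div_iff₀ hsumQpos (by positivity)]
  calc (∑ h, Q h * err h) * (Q0 hstar * (1 - η) ^ (2 * k))
      = ((∑ h, Q h * err h) * (1 - η) ^ k) * (Q0 hstar * (1 - η) ^ k) := by
        rw [two_mul, pow_add]; ring
    _ ≤ (ε * Q0 hstar + δ2 * ∑ h, Qt h) * (Q0 hstar * (1 - η) ^ k) :=
        mul_le_mul_of_nonneg_right hsum (by positivity)
    _ ≤ (ε * Q0 hstar + δ2 * ∑ h, Qt h) * ∑ h, Q h :=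
        mul_le_mul_of_nonneg_left hden hNnn
end

section
/- A skewed instance where limited ground-truth data makes teaching arbitrarily inefficient (Figure 1a phenomenon): for every N ∈ ℕ there exists a finite hypothesis class H of size N+1 with target h*, a ground set Z, and a learner with η = 1 and uniform prior, such that some 2-element teaching set S ⊆ Z drives the learner's error to 0 (eliminates all h ≠ h*), yet for the subcollection Z' = Z \ S, every teaching set S' ⊆ Z' achieving error 0 has |S'| ≥ N. -/
theorem stmt_16 (N : ℕ) :
    ∃ (Z : Type) (_ : Fintype Z) (_ : DecidableEq Z)
      (H : Finset (Z → Bool)) (hstar : Z → Bool) (S : Finset Z),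
      hstar ∈ H ∧ H.card = N + 1 ∧ S.card = 2 ∧
      (∀ h ∈ H, (∀ z ∈ S, h z = hstar z) → h = hstar) ∧
      (∀ S' : Finset Z, Disjoint S' S →
        (∀ h ∈ H, (∀ z ∈ S', h z = hstar z) → h = hstar) → N ≤ S'.card) := by
  classical
  set Z := (Fin 2 ⊕ Fin N)
  let hstar : Z → Bool := fun _ => false
  let hi : Fin N → (Z → Bool) := fun i z =>
    decide (z = Sum.inl 0 ∨ z = Sum.inr i)
  have hi_ne : ∀ i, hi i ≠ hstar := by
    intro i h
    have := congrFun h (Sum.inl 0)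
    simp [hi, hstar] at this
  have hi_inj : Function.Injective hi := by
    intro i j h
    have := congrFun h (Sum.inr i)
    simp [hi] at this
    exact Sum.inr.inj this
  let H : Finset (Z → Bool) := insert hstar (Finset.image hi Finset.univ)
  let S : Finset Z := {Sum.inl 0, Sum.inl 1}
  refine ⟨Z, inferInstance, inferInstance, H, hstar, S, ?_, ?_, ?_, ?_, ?_⟩
  · simp [H]
  · rw [Finset.card_insert_of_notMem, Finset.card_image_of_injective _ hi_inj,
      Finset.card_univ, Fintype.card_fin]
    simp only [Finset.mem_image]
    rintro ⟨i, -, h⟩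
    exact hi_ne i h
  · show ({Sum.inl 0, Sum.inl 1} : Finset Z).card = 2
    rw [Finset.card_insert_of_notMem (fun h => absurd (Sum.inl.inj (Finset.mem_singleton.mp h)) (by decide)), Finset.card_singleton]
  · intro h hh hag
    rcases Finset.mem_insert.mp hh with rfl | hh
    · rfl
    · simp only [Finset.mem_image, Finset.mem_univ, true_and] at hh
      obtain ⟨i, rfl⟩ := hh
      have := hag (Sum.inl 0) (Finset.mem_insert_self _ _)
      simp [hi, hstar] at this
  · intro S' hdisj helim
    have key : ∀ i : Fin N, Sum.inr i ∈ S' := by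
      intro i
      by_contra hni
      have := helim (hi i) (Finset.mem_insert_of_mem (Finset.mem_image_of_mem hi (Finset.mem_univ i))) ?_
      · exact hi_ne i this
      · intro z hz
        have hz0 : z ≠ Sum.inl 0 := by
          rintro rfl
          exact Finset.disjoint_left.mp hdisj hz (by simp [S])
        have hzi : z ≠ Sum.inr i := by rintro rfl; exact hni hz
        simp [hi, hstar, hz0, hzi]
    calc N = (Finset.univ.image (Sum.inr : Fin N → Z)).card := by
            rw [Finset.card_image_of_injective _ Sum.inr_injective,
              Finset.card_univ, Fintype.card_fin]
      _ ≤ S'.card := Finset.card_le_card (by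
            intro z hz
            simp only [Finset.mem_image, Finset.mem_univ, true_and] at hz
            obtain ⟨i, rfl⟩ := hz
            exact key i)
end

section
/- Teaching-set-size transfer under error-estimate noise (Theorem 3, part 2 core): in the setting of a realizable target (m(h*) = 0 under both true and teacher counts, err(h*) = err̃(h*) = 0), with |err̃(h) − err(h)| ≤ δ2, |m(h) − m̃(h)| ≤ k for all h, Q(h) = Q0(h)(1−η)^{m(h)}, Q̃(h) = Q0(h)(1−η)^{m̃(h)}: if Σ_h Q(h)·(err(h) + δ2) ≤ ε·Q0(h*)·(1−η)^{k}, then Σ_h Q̃(h)·err̃(h) ≤ ε·Q0(h*). -/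
theorem stmt_17 {H : Type*} [Fintype H]
    (hstar : H) (Q0 : H → ℝ) (hQ0 : ∀ h, 0 < Q0 h)
    (η : ℝ) (hη : 0 < η) (hη1 : η < 1)
    (k : ℕ) (δ2 ε : ℝ) (hδ2 : 0 ≤ δ2) (hε : 0 ≤ ε)
    (err errt : H → ℝ) (herr : ∀ h, 0 ≤ err h) (herrt : ∀ h, 0 ≤ errt h)
    (hclose : ∀ h, |errt h - err h| ≤ δ2)
    (hes : err hstar = 0) (hest : errt hstar = 0)
    (m mt : H → ℕ) (hm : m hstar = 0) (hmt : mt hstar = 0)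
    (hmm : ∀ h, |(m h : ℤ) - (mt h : ℤ)| ≤ (k : ℤ))
    (Q Qt : H → ℝ)
    (hQ : ∀ h, Q h = Q0 h * (1 - η) ^ (m h))
    (hQt : ∀ h, Qt h = Q0 h * (1 - η) ^ (mt h))
    (hmain : ∑ h, Q h * (err h + δ2) ≤ ε * Q0 hstar * (1 - η) ^ k) :
    ∑ h, Qt h * errt h ≤ ε * Q0 hstar := by
  have h1η : 0 < 1 - η := by linarith
  have h1η1 : 1 - η ≤ 1 := by linarith
  have hpk : 0 < (1 - η) ^ k := pow_pos h1η k
  have key : ∀ h, Qt h * errt h * (1 - η) ^ k ≤ Q h * (err h + δ2) := by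
    intro h
    have hmle : m h ≤ mt h + k := by
      have := (abs_le.mp (hmm h)).2
      omega
    have hpow : (1 - η) ^ (mt h + k) ≤ (1 - η) ^ (m h) :=
      pow_le_pow_of_le_one h1η.le h1η1 hmle
    have herrle : errt h ≤ err h + δ2 := by
      have := (abs_le.mp (hclose h)).2
      linarith
    rw [hQ, hQt]
    calc Q0 h * (1 - η) ^ mt h * errt h * (1 - η) ^ k
        = Q0 h * errt h * (1 - η) ^ (mt h + k) := by ring
      _ ≤ Q0 h * (err h + δ2) * (1 - η) ^ (m h) := by
          apply mul_le_mul (by nlinarith [(hQ0 h).le, herrt h]) hpow (pow_pos h1η _).le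
          nlinarith [(hQ0 h).le, herr h]
      _ = Q0 h * (1 - η) ^ (m h) * (err h + δ2) := by ring
  have hsum : (∑ h, Qt h * errt h) * (1 - η) ^ k ≤ ∑ h, Q h * (err h + δ2) := by
    rw [Finset.sum_mul]
    exact Finset.sum_le_sum fun h _ => key h
  have := hsum.trans hmain
  calc ∑ h, Qt h * errt h = (∑ h, Qt h * errt h) * (1 - η) ^ k / (1 - η) ^ k := by
        field_simp
    _ ≤ ε * Q0 hstar * (1 - η) ^ k / (1 - η) ^ k := by
        gcongr
    _ = ε * Q0 hstar := by field_simp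
end
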